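/- arXiv:1901.01252 — 2 statements merged into one kernel-verified Lean document; each statement's English description precedes it below -/
import Mathlib

section
/- The collection S(h_L) of subpresheaves of h_L having some b-index is a sub-Heyting-algebra of the Heyting algebra Sub(h_L) of all subpresheaves of h_L. -/
/-- A finite rooted poset: a finite partial order with a greatest element (the root). -/
structure FRP : Type 1 where
  carrier : Type
  [po : PartialOrder carrier]
  [fin : Finite carrier]
  root : carrier
  le_root : ∀ x : carrier, x ≤ root

attribute [instance] FRP.po FRP.fin

/-- The downset of a point, as a finite rooted poset. -/
def FRP.down (P : FRP) (p : P.carrier) : FRP where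
  carrier := {x : P.carrier // x ≤ p}
  root := ⟨p, le_refl p⟩
  le_root := fun x => x.2

/-- An `L`-evaluation: a monotone map from a finite rooted poset into `L`. -/
structure Eval (L : Type) [PartialOrder L] : Type 1 where
  P : FRP
  map : P.carrier → L
  mono : Monotone map

variable {L : Type} [PartialOrder L]

/-- Restriction of an evaluation to the downset of a point. -/
def Eval.restrict (u : Eval L) (p : u.P.carrier) : Eval L where
  P := u.P.down p
  map := fun x => u.map x.1
  mono := fun _ _ h => u.mono h

/-- The value of an evaluation at the root of its domain. -/
def Eval.rootVal (u : Eval L) : L := u.map u.P.root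

/-- The relations `∼ₙ` on `L`-evaluations. -/
def sim (L : Type) [PartialOrder L] : ℕ → Eval L → Eval L → Prop
  | 0 => fun u v => u.rootVal = v.rootVal
  | n+1 => fun u v =>
      (∀ p, ∃ q, sim L n (u.restrict p) (v.restrict q)) ∧
      (∀ q, ∃ p, sim L n (v.restrict q) (u.restrict p))

/-- The relations `≤ₙ`: `lev L n v u` means `v ≤ₙ u`. -/
def lev (L : Type) [PartialOrder L] : ℕ → Eval L → Eval L → Prop
  | 0 => fun v u => v.rootVal ≤ u.rootVal
  | n+1 => fun v u => ∀ q, ∃ p, sim L n (v.restrict q) (u.restrict p)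

/-- `S` is a subpresheaf of `h_L`: closed under restriction. -/
def IsSub (L : Type) [PartialOrder L] (S : Set (Eval L)) : Prop :=
  ∀ u ∈ S, ∀ p, u.restrict p ∈ S

/-- `S` has b-index `n`: closed under `∼ₙ`. -/
def BIndex (L : Type) [PartialOrder L] (n : ℕ) (S : Set (Eval L)) : Prop :=
  ∀ u ∈ S, ∀ v, sim L n u v → v ∈ S

/-- `S` has b≤-index `n`: closed under being `≤ₙ`-below a member. -/
def BleIndex (L : Type) [PartialOrder L] (n : ℕ) (S : Set (Eval L)) : Prop :=
  ∀ u ∈ S, ∀ v, lev L n v u → v ∈ S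

/-- `↓ₙ u`. -/
def downSet (L : Type) [PartialOrder L] (n : ℕ) (u : Eval L) : Set (Eval L) :=
  {v | lev L n v u}

/-- Pointwise description of Heyting implication of subpresheaves. -/
def himpPt (L : Type) [PartialOrder L] (S T : Set (Eval L)) : Set (Eval L) :=
  {u | ∀ p, u.restrict p ∈ S → u.restrict p ∈ T}

/-- The embedding of downward closed subsets of `L` into subpresheaves. -/
def iota (L : Type) [PartialOrder L] (d : Set L) : Set (Eval L) :=
  {u | u.rootVal ∈ d}

/-- Membership in the Heyting algebra `S(h_L)`: subpresheaves with a b-index. -/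
def InS (L : Type) [PartialOrder L] (S : Set (Eval L)) : Prop :=
  IsSub L S ∧ ∃ n, BIndex L n S

/-- `ev_f`. -/
def evalMap (L : Type) [PartialOrder L] (f : Eval L) (X : Set (Eval L)) : Set f.P.carrier :=
  {p | f.restrict p ∈ X}

/-- Heyting implication of downward closed subsets of a poset. -/
def himpD {M : Type} [PartialOrder M] (a b : Set M) : Set M :=
  {p | ∀ q ≤ p, q ∈ a → q ∈ b}

lemma sim_symm : ∀ n (u v : Eval L), sim L n u v → sim L n v u
  | 0, _, _, h => h.symm
  | _+1, _, _, ⟨h1, h2⟩ => ⟨h2, h1⟩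

lemma sim_succ_imp : ∀ n (u v : Eval L), sim L (n+1) u v → sim L n u v
  | 0, u, v, ⟨h1, h2⟩ => by
      obtain ⟨q, hq⟩ := h1 u.P.root
      obtain ⟨p, hp⟩ := h2 v.P.root
      have e1 : u.rootVal = v.map q := hq
      have e2 : v.rootVal = u.map p := hp
      show u.rootVal = v.rootVal
      exact le_antisymm (e1.trans_le (v.mono (v.P.le_root q)))
        (e2.trans_le (u.mono (u.P.le_root p)))
  | n+1, _, _, ⟨h1, h2⟩ =>
      ⟨fun p => (h1 p).imp fun _ => sim_succ_imp n _ _,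
       fun q => (h2 q).imp fun _ => sim_succ_imp n _ _⟩

lemma sim_mono {m n : ℕ} (h : m ≤ n) {u v : Eval L} : sim L n u v → sim L m u v := by
  induction n with
  | zero => obtain rfl := Nat.le_zero.mp h; exact id
  | succ n ih =>
    rcases Nat.lt_or_ge m (n+1) with hm | hm
    · exact fun hs => ih (Nat.lt_succ_iff.mp hm) (sim_succ_imp n _ _ hs)
    · obtain rfl : m = n+1 := le_antisymm h hm; exact id

/-- Isomorphism of evaluations. -/
def EvalIso (u v : Eval L) : Prop :=
  ∃ e : u.P.carrier ≃ v.P.carrier,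
    (∀ x y : u.P.carrier, x ≤ y ↔ e x ≤ e y) ∧
    e u.P.root = v.P.root ∧ (∀ x, v.map (e x) = u.map x)

lemma EvalIso.symm {u v : Eval L} (h : EvalIso u v) : EvalIso v u := by
  obtain ⟨e, hord, hroot, hmap⟩ := h
  refine ⟨e.symm, fun x y => ?_, ?_, fun x => ?_⟩
  · rw [hord]; simp
  · rw [← hroot]; simp
  · rw [← hmap]; simp

lemma EvalIso.restrict {u v : Eval L} (h : EvalIso u v) (p : u.P.carrier) :
    ∃ q, EvalIso (u.restrict p) (v.restrict q) := by
  obtain ⟨e, hord, hroot, hmap⟩ := h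
  refine ⟨e p, ⟨⟨fun x => ⟨e x.1, (hord x.1 p).1 x.2⟩,
      fun y => ⟨e.symm y.1, ?_⟩, fun x => Subtype.ext (e.symm_apply_apply x.1),
      fun y => Subtype.ext (e.apply_symm_apply y.1)⟩, fun x y => ?_, ?_, fun x => ?_⟩⟩
  · rw [hord (e.symm y.1) p, e.apply_symm_apply]; exact y.2
  · exact hord x.1 y.1
  · exact Subtype.ext rfl
  · exact hmap x.1

lemma sim_of_iso : ∀ n {u v : Eval L}, EvalIso u v → sim L n u v
  | 0, u, v, ⟨e, _, hroot, hmap⟩ => by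
      show u.rootVal = v.rootVal
      rw [Eval.rootVal, Eval.rootVal, ← hroot, hmap]
  | n+1, u, v, h =>
      ⟨fun p => (h.restrict p).imp fun _ hq => sim_of_iso n hq,
       fun q => (h.symm.restrict q).imp fun _ hp => sim_of_iso n hp⟩

lemma iso_restrict_restrict (u : Eval L) (p : u.P.carrier)
    (r : (u.restrict p).P.carrier) :
    EvalIso ((u.restrict p).restrict r) (u.restrict r.1) :=
  ⟨⟨fun x => ⟨x.1.1, x.2⟩, fun y => ⟨⟨y.1, le_trans y.2 r.2⟩, y.2⟩,
    fun x => Subtype.ext (Subtype.ext rfl), fun y => Subtype.ext rfl⟩,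
   fun x y => Iff.rfl, Subtype.ext rfl, fun x => rfl⟩

lemma iso_restrict_root (u : Eval L) : EvalIso (u.restrict u.P.root) u :=
  ⟨⟨fun x => x.1, fun y => ⟨y, u.P.le_root y⟩, fun x => Subtype.ext rfl, fun y => rfl⟩,
   fun x y => Iff.rfl, rfl, fun x => rfl⟩

/-- `S(h_L)` is a sub-Heyting algebra of `Sub(h_L)`: it contains the bottom
and top subpresheaves, and is closed under meet, join and Heyting implication (which on
`S(h_L)` is given by the pointwise clause and is the relative pseudocomplement). -/
theorem S_subHeyting (L : Type) [PartialOrder L] [Finite L] :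
    InS L (∅ : Set (Eval L)) ∧ InS L (Set.univ : Set (Eval L)) ∧
    ∀ S T : Set (Eval L), InS L S → InS L T →
      InS L (S ∩ T) ∧ InS L (S ∪ T) ∧ InS L (himpPt L S T) ∧
      (∀ U : Set (Eval L), InS L U → (U ∩ S ⊆ T ↔ U ⊆ himpPt L S T)) := by
  have bot : InS L (∅ : Set (Eval L)) := ⟨fun u hu => hu.elim, 0, fun u hu => hu.elim⟩
  have top : InS L (Set.univ : Set (Eval L)) :=
    ⟨fun _ _ _ => trivial, 0, fun _ _ _ _ => trivial⟩
  refine ⟨bot, top, fun S T hS hT => ?_⟩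
  obtain ⟨hSsub, nS, hSb⟩ := hS
  obtain ⟨hTsub, nT, hTb⟩ := hT
  set n := max nS nT with hn
  have hSb' : BIndex L n S := fun u hu v hv => hSb u hu v (sim_mono (le_max_left _ _) hv)
  have hTb' : BIndex L n T := fun u hu v hv => hTb u hu v (sim_mono (le_max_right _ _) hv)
  have hHsub : IsSub L (himpPt L S T) := by
    intro u hu p r hr
    have hiso := iso_restrict_restrict u p r
    have hw : u.restrict r.1 ∈ S := hSb' _ hr _ (sim_of_iso n hiso)
    have hwT : u.restrict r.1 ∈ T := hu r.1 hw
    exact hTb' _ hwT _ (sim_of_iso n hiso.symm)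
  have hHb : BIndex L (n+1) (himpPt L S T) := by
    intro u hu v hv q hq
    obtain ⟨p, hp⟩ := hv.2 q
    have hpS : u.restrict p ∈ S := hSb' _ hq _ hp
    exact hTb' _ (hu p hpS) _ (sim_symm n _ _ hp)
  refine ⟨⟨fun u hu p => ⟨hSsub u hu.1 p, hTsub u hu.2 p⟩, n,
      fun u hu v hv => ⟨hSb' u hu.1 v hv, hTb' u hu.2 v hv⟩⟩,
    ⟨fun u hu p => hu.imp (fun h => hSsub u h p) (fun h => hTsub u h p), n,
      fun u hu v hv => hu.imp (fun h => hSb' u h v hv) (fun h => hTb' u h v hv)⟩,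
    ⟨hHsub, n+1, hHb⟩, fun U hU => ?_⟩
  constructor
  · intro h u hu p hp
    exact h ⟨hU.1 u hu p, hp⟩
  · rintro h u ⟨huU, huS⟩
    have h3 : u.restrict u.P.root ∈ T := h huU u.P.root (hSsub u huS u.P.root)
    exact hTb' _ h3 _ (sim_of_iso n (iso_restrict_root u))
end

section
/- Let μ : S(h_L) → S(h_M) be a Heyting algebra morphism and define μ*_P(u), for u ∈ h_M(P), as the L-evaluation dual to the distributive lattice morphism ev_u ∘ μ ∘ ι_L : D(L) → D(P). Then for every X ∈ S(h_L) and u ∈ h_M(P): μ*_P(u) ∈ X_P if and only if u ∈ μ(X)_P. -/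
variable {L : Type} [PartialOrder L]

/-!
Fix `u ∈ h_M(P)` and let `w = μ*_P(u)`. Call `X ∈ S(h_L)` good if `w↾p ∈ X ↔ u↾p ∈ μ X` for every
`p ∈ P`. By the defining property of `w` every `ι_L d` is good. Since `μ` preserves `∩`, `∪`, `⇒`,
and members of `S(h)` cannot tell `(x↾p)↾q` from `x↾q`, good sets are closed under these operations.
Every `X` of b-index `n` is the union of the sets `↓ₙ₊₁ x` with `x ∈ X`; `↓₀ x = ι_L (↓ x(ρ))`, and
`↓ₙ₊₁ x` is the intersection, over the `∼ₙ`-classes `c` not met by any restriction of `x`, of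
`↓ₙ c ⇒ ⋃ {↓ₙ c' | c' <ₙ c}`. As `L` is finite, each `∼ₙ` has finitely many classes, so all these
unions and intersections are finite. Hence every `X` is good; evaluate at the root of `P`.
-/

section Similarity

/-- A complete invariant of `∼ₙ`, valued in a finite type when `L` is finite. -/
def SimType (L : Type) : ℕ → Type
  | 0 => L
  | n + 1 => Set (SimType L n)

instance SimType.finite [Finite L] : ∀ n, Finite (SimType L n)
  | 0 => ‹Finite L›
  | n + 1 => have := SimType.finite n; Set.instFinite

def simType : (n : ℕ) → Eval L → SimType L n
  | 0, x => x.rootVal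
  | n + 1, x => Set.range fun p => simType n (x.restrict p)

theorem sim_iff_simType_eq : ∀ (n : ℕ) {x y : Eval L}, sim L n x y ↔ simType n x = simType n y
  | 0, _, _ => Iff.rfl
  | n + 1, x, y => by
    refine Iff.trans ?_ (Set.Subset.antisymm_iff (α := SimType L n)).symm
    simp only [sim, simType, Set.range_subset_iff, Set.mem_range, sim_iff_simType_eq n]
    exact and_congr (forall_congr' fun _ => exists_congr fun _ => eq_comm)
      (forall_congr' fun _ => exists_congr fun _ => eq_comm)

theorem sim_refl (n : ℕ) (x : Eval L) : sim L n x x :=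
  (sim_iff_simType_eq n).mpr rfl

theorem sim_symm_s18 {n : ℕ} {x y : Eval L} (h : sim L n x y) : sim L n y x :=
  (sim_iff_simType_eq n).mpr ((sim_iff_simType_eq n).mp h).symm

theorem sim_trans {n : ℕ} {x y z : Eval L} (hxy : sim L n x y) (hyz : sim L n y z) :
    sim L n x z :=
  (sim_iff_simType_eq n).mpr (((sim_iff_simType_eq n).mp hxy).trans ((sim_iff_simType_eq n).mp hyz))

theorem finite_range_of_sim [Finite L] {α : Type*} {n : ℕ} {g : Eval L → α}
    (hg : ∀ x y, sim L n x y → g x = g y) : (Set.range g).Finite := by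
  refine (Set.finite_range fun t : Set.range (simType (L := L) n) => g t.2.choose).subset ?_
  rintro _ ⟨x, rfl⟩
  have hx : simType n x ∈ Set.range (simType n) := ⟨x, rfl⟩
  exact ⟨⟨_, hx⟩, hg _ _ ((sim_iff_simType_eq n).mpr hx.choose_spec)⟩

theorem rootVal_eq_of_sim : ∀ (n : ℕ) {x y : Eval L}, sim L n x y → x.rootVal = y.rootVal
  | 0, _, _, h => h
  | n + 1, _, _, h => by
    have rootVal_le {a b : Eval L} (hab : ∀ q, ∃ p, sim L n (a.restrict q) (b.restrict p)) :
        a.rootVal ≤ b.rootVal := by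
      obtain ⟨p, hp⟩ := hab a.P.root
      exact (rootVal_eq_of_sim n hp).le.trans (b.mono (b.P.le_root p))
    exact (rootVal_le h.1).antisymm (rootVal_le h.2)

theorem sim_of_sim_succ : ∀ (n : ℕ) {x y : Eval L}, sim L (n + 1) x y → sim L n x y
  | 0, _, _, h => rootVal_eq_of_sim 1 h
  | n + 1, _, _, h =>
    ⟨fun p => (h.1 p).imp fun _ => sim_of_sim_succ n,
     fun q => (h.2 q).imp fun _ => sim_of_sim_succ n⟩

theorem sim_of_le {m n : ℕ} (hmn : m ≤ n) {x y : Eval L} (h : sim L n x y) : sim L m x y :=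
  antitone_nat_of_succ_le (f := sim L) (fun k _ _ => sim_of_sim_succ k) hmn x y h

end Similarity

section Isomorphism

theorem FRP.map_root {P Q : FRP} (e : P.carrier ≃o Q.carrier) : e P.root = Q.root :=
  (Q.le_root _).antisymm (e.symm_apply_le.mp (P.le_root _))

def FRP.downCongr {P Q : FRP} (e : P.carrier ≃o Q.carrier) (p : P.carrier) :
    (P.down p).carrier ≃o (Q.down (e p)).carrier where
  toFun x := ⟨e x.1, e.monotone x.2⟩
  invFun y := ⟨e.symm y.1, e.symm_apply_le.mpr y.2⟩
  left_inv _ := Subtype.ext (e.symm_apply_apply _)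
  right_inv _ := Subtype.ext (e.apply_symm_apply _)
  map_rel_iff' := e.le_iff_le

def FRP.downRootIso (P : FRP) : (P.down P.root).carrier ≃o P.carrier where
  toFun x := x.1
  invFun a := ⟨a, P.le_root a⟩
  left_inv _ := rfl
  right_inv _ := rfl
  map_rel_iff' := Iff.rfl

def FRP.downDownIso (P : FRP) (p : P.carrier) (q : (P.down p).carrier) :
    ((P.down p).down q).carrier ≃o (P.down q.1).carrier where
  toFun x := ⟨x.1.1, x.2⟩
  invFun a := ⟨⟨a.1, a.2.trans q.2⟩, a.2⟩
  left_inv _ := rfl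
  right_inv _ := rfl
  map_rel_iff' := Iff.rfl

theorem sim_of_orderIso : ∀ (n : ℕ) (x y : Eval L) (e : x.P.carrier ≃o y.P.carrier),
    (∀ a, y.map (e a) = x.map a) → sim L n x y
  | 0, x, y, e, he => by
    change x.rootVal = y.rootVal
    rw [Eval.rootVal, Eval.rootVal, ← FRP.map_root e, he]
  | n + 1, x, y, e, he =>
    ⟨fun p => ⟨e p, sim_of_orderIso n _ _ (FRP.downCongr e p) fun a => he a.1⟩,
     fun q => ⟨e.symm q, sim_symm_s18 <| by
      simpa only [e.apply_symm_apply] using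
        sim_of_orderIso n (x.restrict (e.symm q)) (y.restrict (e (e.symm q)))
          (FRP.downCongr e _) fun a => he a.1⟩⟩

theorem sim_restrict_root (n : ℕ) (x : Eval L) : sim L n (x.restrict x.P.root) x :=
  sim_of_orderIso n _ _ x.P.downRootIso fun _ => rfl

theorem sim_restrict_restrict (n : ℕ) (x : Eval L) (p : x.P.carrier)
    (q : (x.restrict p).P.carrier) :
    sim L n ((x.restrict p).restrict q) (x.restrict q.1) :=
  sim_of_orderIso n _ _ (x.P.downDownIso p q) fun _ => rfl

end Isomorphism

section Subpresheaves

variable {S T : Set (Eval L)}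

theorem BIndex.mem_iff {n : ℕ} (hS : BIndex L n S) {x y : Eval L} (h : sim L n x y) :
    x ∈ S ↔ y ∈ S :=
  ⟨fun hx => hS x hx y h, fun hy => hS y hy x (sim_symm_s18 h)⟩

theorem BIndex.mono {m n : ℕ} (hmn : m ≤ n) (hS : BIndex L m S) : BIndex L n S :=
  fun x hx y h => hS x hx y (sim_of_le hmn h)

theorem InS.restrict_root_mem_iff (hS : InS L S) (x : Eval L) :
    x.restrict x.P.root ∈ S ↔ x ∈ S :=
  let ⟨_, _, hB⟩ := hS
  hB.mem_iff (sim_restrict_root _ x)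

theorem InS.restrict_restrict_mem_iff (hS : InS L S) (x : Eval L) (p : x.P.carrier)
    (q : (x.restrict p).P.carrier) : (x.restrict p).restrict q ∈ S ↔ x.restrict q.1 ∈ S :=
  let ⟨_, _, hB⟩ := hS
  hB.mem_iff (sim_restrict_restrict _ x p q)

theorem inS_iota {d : Set L} (hd : IsLowerSet d) : InS L (iota L d) :=
  ⟨fun x hx p => hd (x.mono (x.P.le_root p)) hx, 0, fun x hx y h =>
    show y.rootVal ∈ d from (h : x.rootVal = y.rootVal) ▸ hx⟩

theorem inS_inter (hS : InS L S) (hT : InS L T) : InS L (S ∩ T) :=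
  let ⟨hS, m, hSm⟩ := hS
  let ⟨hT, n, hTn⟩ := hT
  ⟨fun x hx p => ⟨hS x hx.1 p, hT x hx.2 p⟩, max m n, fun x hx y h =>
    ⟨(hSm.mono (le_max_left m n)) x hx.1 y h, (hTn.mono (le_max_right m n)) x hx.2 y h⟩⟩

theorem inS_union (hS : InS L S) (hT : InS L T) : InS L (S ∪ T) :=
  let ⟨hS, m, hSm⟩ := hS
  let ⟨hT, n, hTn⟩ := hT
  ⟨fun x hx p => hx.imp (hS x · p) (hT x · p), max m n, fun x hx y h =>
    hx.imp (hSm.mono (le_max_left m n) x · y h) (hTn.mono (le_max_right m n) x · y h)⟩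

theorem inS_himpPt (hS : InS L S) (hT : InS L T) : InS L (himpPt L S T) := by
  refine ⟨fun x hx p q => ?_, ?_⟩
  · rw [hS.restrict_restrict_mem_iff, hT.restrict_restrict_mem_iff]
    exact hx q.1
  · obtain ⟨-, m, hSm⟩ := hS
    obtain ⟨-, n, hTn⟩ := hT
    refine ⟨max m n + 1, fun x hx y h q hq => ?_⟩
    obtain ⟨p, hp⟩ := h.2 q
    have hxS : x.restrict p ∈ S := (hSm.mono (le_max_left m n)).mem_iff hp |>.mp hq
    exact (hTn.mono (le_max_right m n)).mem_iff hp |>.mpr (hx p hxS)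

end Subpresheaves

section DownSets

theorem lev_refl : ∀ (n : ℕ) (x : Eval L), lev L n x x
  | 0, _ => le_rfl
  | n + 1, _ => fun q => ⟨q, sim_refl n _⟩

theorem lev_trans : ∀ {n : ℕ} {x y z : Eval L}, lev L n x y → lev L n y z → lev L n x z
  | 0, _, _, _, hxy, hyz => hxy.trans hyz
  | _ + 1, _, _, _, hxy, hyz => fun q =>
    let ⟨p, hp⟩ := hxy q
    let ⟨r, hr⟩ := hyz p
    ⟨r, sim_trans hp hr⟩

theorem lev_of_sim : ∀ {n : ℕ} {x y : Eval L}, sim L n x y → lev L n x y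
  | 0, _, _, h => h.le
  | _ + 1, _, _, h => h.1

theorem sim_iff_lev : ∀ {n : ℕ} {x y : Eval L}, sim L n x y ↔ lev L n x y ∧ lev L n y x
  | 0, _, _ => le_antisymm_iff
  | _ + 1, _, _ => Iff.rfl

theorem lev_restrict : ∀ {n : ℕ} {x y : Eval L} (p : x.P.carrier),
    lev L n x y → lev L n (x.restrict p) y
  | 0, x, _, p, h => (x.mono (x.P.le_root p)).trans h
  | n + 1, x, _, p, h => fun q =>
    let ⟨r, hr⟩ := h q.1
    ⟨r, sim_trans (sim_restrict_restrict n x p q) hr⟩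

theorem downSet_congr {n : ℕ} {x y : Eval L} (h : sim L n x y) : downSet L n x = downSet L n y :=
  Set.ext fun _ =>
    ⟨fun hv => lev_trans hv (lev_of_sim h), fun hv => lev_trans hv (lev_of_sim (sim_symm_s18 h))⟩

theorem inS_downSet (n : ℕ) (x : Eval L) : InS L (downSet L n x) :=
  ⟨fun _ hv p => lev_restrict p hv, n, fun _ hv _ h => lev_trans (lev_of_sim (sim_symm_s18 h)) hv⟩

def avoidClass (n : ℕ) (c : Eval L) : Set (Eval L) :=
  {v | ∀ q, ¬ sim L n (v.restrict q) c}

theorem avoidClass_congr {n : ℕ} {c c' : Eval L} (h : sim L n c c') :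
    avoidClass n c = avoidClass n c' :=
  Set.ext fun _ => forall_congr' fun _ =>
    not_congr ⟨fun hc => sim_trans hc h, fun hc' => sim_trans hc' (sim_symm_s18 h)⟩

def strictDownSet (n : ℕ) (c : Eval L) : Set (Eval L) :=
  ⋃₀ (downSet L n '' {c' | lev L n c' c ∧ ¬ lev L n c c'})

theorem himpPt_downSet_strictDownSet (n : ℕ) (c : Eval L) :
    himpPt L (downSet L n c) (strictDownSet n c) = avoidClass n c := by
  ext v
  refine forall_congr' fun q => ?_
  simp only [strictDownSet, downSet, Set.sUnion_image, Set.mem_iUnion, Set.mem_ofPred_eq,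
    sim_iff_lev, exists_prop]
  constructor
  · rintro h ⟨hvc, hcv⟩
    obtain ⟨c', ⟨-, hcc'⟩, hvc'⟩ := h hvc
    exact hcc' (lev_trans hcv hvc')
  · intro h hvc
    exact ⟨_, ⟨hvc, fun hcv => h ⟨hvc, hcv⟩⟩, lev_refl n _⟩

theorem downSet_succ_eq_sInter (n : ℕ) (x : Eval L) :
    downSet L (n + 1) x = ⋂₀ (avoidClass n '' {c | ∀ p, ¬ sim L n (x.restrict p) c}) := by
  ext v
  simp only [avoidClass, Set.sInter_image, Set.mem_iInter, Set.mem_ofPred_eq]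
  constructor
  · intro hv c hc q hvc
    obtain ⟨p, hp⟩ := hv q
    exact hc p (sim_trans (sim_symm_s18 hp) hvc)
  · intro hv q
    by_contra! hq
    exact hv (v.restrict q) (fun p h => hq p (sim_symm_s18 h)) q (sim_refl n _)

theorem eq_sUnion_downSet_succ {X : Set (Eval L)} {n : ℕ} (hX : IsSub L X) (hB : BIndex L n X) :
    X = ⋃₀ (downSet L (n + 1) '' X) := by
  refine Set.Subset.antisymm (fun x hx => ⟨_, ⟨x, hx, rfl⟩, lev_refl (n + 1) x⟩) ?_
  rintro v ⟨_, ⟨x, hx, rfl⟩, hv⟩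
  obtain ⟨p, hp⟩ := hv v.P.root
  have hv_root : v.restrict v.P.root ∈ X := hB _ (hX x hx p) _ (sim_symm_s18 hp)
  exact hB _ hv_root _ (sim_restrict_root n v)

end DownSets

section Transfer

variable {M : Type} [PartialOrder M]

structure PreservesHeytingOps (mu : Set (Eval L) → Set (Eval M)) : Prop where
  mapsTo : ∀ ⦃S⦄, InS L S → InS M (mu S)
  map_inter : ∀ ⦃S T⦄, InS L S → InS L T → mu (S ∩ T) = mu S ∩ mu T
  map_union : ∀ ⦃S T⦄, InS L S → InS L T → mu (S ∪ T) = mu S ∪ mu T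
  map_himpPt : ∀ ⦃S T⦄, InS L S → InS L T → mu (himpPt L S T) = himpPt M (mu S) (mu T)

/-- `f` is the `L`-evaluation on the frame of `u` dual to `ev_u ∘ μ ∘ ι_L : D(L) → D(P)`. -/
def IsDualEval (mu : Set (Eval L) → Set (Eval M)) (u : Eval M) (f : u.P.carrier → L) : Prop :=
  ∀ d : Set L, IsLowerSet d → ∀ p, f p ∈ d ↔ u.restrict p ∈ mu (iota L d)

def Agrees (mu : Set (Eval L) → Set (Eval M)) (u : Eval M) (f : u.P.carrier → L)
    (hf : Monotone f) (S : Set (Eval L)) : Prop :=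
  InS L S ∧ ∀ p, (⟨u.P, f, hf⟩ : Eval L).restrict p ∈ S ↔ u.restrict p ∈ mu S

variable {mu : Set (Eval L) → Set (Eval M)} {u : Eval M} {f : u.P.carrier → L} {hf : Monotone f}
  {S T : Set (Eval L)}

theorem agrees_iota (hι : IsDualEval mu u f) {d : Set L} (hd : IsLowerSet d) :
    Agrees mu u f hf (iota L d) :=
  ⟨inS_iota hd, hι d hd⟩

theorem agrees_empty (hι : IsDualEval mu u f) : Agrees mu u f hf ∅ :=
  agrees_iota hι isLowerSet_empty

theorem agrees_univ (hι : IsDualEval mu u f) : Agrees mu u f hf Set.univ :=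
  agrees_iota hι isLowerSet_univ

theorem Agrees.inter (H : PreservesHeytingOps mu) (hS : Agrees mu u f hf S)
    (hT : Agrees mu u f hf T) : Agrees mu u f hf (S ∩ T) :=
  ⟨inS_inter hS.1 hT.1, fun p => by
    rw [H.map_inter hS.1 hT.1]
    exact and_congr (hS.2 p) (hT.2 p)⟩

theorem Agrees.union (H : PreservesHeytingOps mu) (hS : Agrees mu u f hf S)
    (hT : Agrees mu u f hf T) : Agrees mu u f hf (S ∪ T) :=
  ⟨inS_union hS.1 hT.1, fun p => by
    rw [H.map_union hS.1 hT.1]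
    exact or_congr (hS.2 p) (hT.2 p)⟩

theorem Agrees.himpPt (H : PreservesHeytingOps mu) (hS : Agrees mu u f hf S)
    (hT : Agrees mu u f hf T) : Agrees mu u f hf (himpPt L S T) :=
  ⟨inS_himpPt hS.1 hT.1, fun p => by
    rw [H.map_himpPt hS.1 hT.1]
    refine forall_congr' fun q => ?_
    rw [hS.1.restrict_restrict_mem_iff, hT.1.restrict_restrict_mem_iff,
      (H.mapsTo hS.1).restrict_restrict_mem_iff u p q,
      (H.mapsTo hT.1).restrict_restrict_mem_iff u p q]
    exact imp_congr (hS.2 q.1) (hT.2 q.1)⟩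

theorem agrees_sUnion (H : PreservesHeytingOps mu) (hι : IsDualEval mu u f)
    {s : Set (Set (Eval L))} (hs : s.Finite) (h : ∀ S ∈ s, Agrees mu u f hf S) :
    Agrees mu u f hf (⋃₀ s) := by
  rw [← hs.coe_toFinset, ← Finset.sup_id_set_eq_sUnion]
  exact Finset.sup_induction (agrees_empty hι) (fun _ hS _ hT => hS.union H hT)
    fun S hS => h S (hs.mem_toFinset.mp hS)

theorem agrees_sInter (H : PreservesHeytingOps mu) (hι : IsDualEval mu u f)
    {s : Set (Set (Eval L))} (hs : s.Finite) (h : ∀ S ∈ s, Agrees mu u f hf S) :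
    Agrees mu u f hf (⋂₀ s) := by
  rw [← hs.coe_toFinset, ← Finset.inf_id_set_eq_sInter]
  exact Finset.inf_induction (agrees_univ hι) (fun _ hS _ hT => hS.inter H hT)
    fun S hS => h S (hs.mem_toFinset.mp hS)

theorem agrees_downSet [Finite L] (H : PreservesHeytingOps mu) (hι : IsDualEval mu u f) :
    ∀ (n : ℕ) (x : Eval L), Agrees mu u f hf (downSet L n x)
  | 0, x => agrees_iota hι (isLowerSet_Iic x.rootVal)
  | n + 1, x => by
    have hfin_downSet : (Set.range (downSet L n)).Finite :=
      finite_range_of_sim fun _ _ => downSet_congr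
    have hfin_avoid : (Set.range (avoidClass (L := L) n)).Finite :=
      finite_range_of_sim fun _ _ => avoidClass_congr
    rw [downSet_succ_eq_sInter]
    refine agrees_sInter H hι (hfin_avoid.subset (Set.image_subset_range _ _)) ?_
    rintro _ ⟨c, -, rfl⟩
    rw [← himpPt_downSet_strictDownSet]
    refine (agrees_downSet H hι n c).himpPt H (agrees_sUnion H hι
      (hfin_downSet.subset (Set.image_subset_range _ _)) ?_)
    rintro _ ⟨c', -, rfl⟩
    exact agrees_downSet H hι n c'

theorem agrees_of_inS [Finite L] (H : PreservesHeytingOps mu) (hι : IsDualEval mu u f)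
    {X : Set (Eval L)} (hX : InS L X) : Agrees mu u f hf X := by
  obtain ⟨hsub, n, hB⟩ := hX
  rw [eq_sUnion_downSet_succ hsub hB]
  refine agrees_sUnion H hι ((finite_range_of_sim fun _ _ => downSet_congr).subset
    (Set.image_subset_range _ _)) ?_
  rintro _ ⟨x, -, rfl⟩
  exact agrees_downSet H hι (n + 1) x

end Transfer

theorem mu_star_membership_general (L M : Type) [PartialOrder L] [Finite L]
    [PartialOrder M]
    (mu : Set (Eval L) → Set (Eval M))
    (hmuInS : ∀ X : Set (Eval L), InS L X → InS M (mu X))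
    (hmu_inter : ∀ S T : Set (Eval L), InS L S → InS L T → mu (S ∩ T) = mu S ∩ mu T)
    (hmu_union : ∀ S T : Set (Eval L), InS L S → InS L T → mu (S ∪ T) = mu S ∪ mu T)
    (hmu_himp : ∀ S T : Set (Eval L), InS L S → InS L T →
      mu (himpPt L S T) = himpPt M (mu S) (mu T))
    (u : Eval M) (w : Eval L) (hP : w.P = u.P)
    (hdual : ∀ d : Set L, IsLowerSet d → ∀ p : u.P.carrier,
      (w.map (cast (congrArg FRP.carrier hP.symm) p) ∈ d ↔ u.restrict p ∈ mu (iota L d))) :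
    ∀ X : Set (Eval L), InS L X → (w ∈ X ↔ u ∈ mu X) := by
  obtain ⟨P, f, hf⟩ := w
  -- now the cast in `hdual` is the identity, and `hdual : IsDualEval mu u f`
  obtain rfl : P = u.P := hP
  have H : PreservesHeytingOps mu := ⟨hmuInS, hmu_inter, hmu_union, hmu_himp⟩
  intro X hX
  have h_root := (agrees_of_inS (f := f) (hf := hf) H hdual hX).2 u.P.root
  rwa [hX.restrict_root_mem_iff, (hmuInS X hX).restrict_root_mem_iff] at h_root

/-- for a Heyting algebra morphism `μ : S(h_L) → S(h_M)`, an evaluation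
`u ∈ h_M(P)`, and `μ*_P(u)` the `L`-evaluation on `P` dual to the lattice morphism
`ev_u ∘ μ ∘ ι_L : D(L) → D(P)`, one has `μ*_P(u) ∈ X_P` iff `u ∈ μ(X)_P`, for every
`X ∈ S(h_L)`. -/
theorem mu_star_membership (L M : Type) [PartialOrder L] [Finite L]
    [PartialOrder M] [Finite M]
    (mu : Set (Eval L) → Set (Eval M))
    (hmuInS : ∀ X : Set (Eval L), InS L X → InS M (mu X))
    (hmu_inter : ∀ S T : Set (Eval L), InS L S → InS L T → mu (S ∩ T) = mu S ∩ mu T)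
    (hmu_union : ∀ S T : Set (Eval L), InS L S → InS L T → mu (S ∪ T) = mu S ∪ mu T)
    (hmu_himp : ∀ S T : Set (Eval L), InS L S → InS L T →
      mu (himpPt L S T) = himpPt M (mu S) (mu T))
    (hmu_bot : mu (∅ : Set (Eval L)) = ∅)
    (hmu_top : mu (Set.univ : Set (Eval L)) = Set.univ)
    (u : Eval M) (w : Eval L) (hP : w.P = u.P)
    (hdual : ∀ d : Set L, IsLowerSet d → ∀ p : u.P.carrier,
      (w.map (cast (congrArg FRP.carrier hP.symm) p) ∈ d ↔ u.restrict p ∈ mu (iota L d))) :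
    ∀ X : Set (Eval L), InS L X → (w ∈ X ↔ u ∈ mu X) :=
  mu_star_membership_general L M mu hmuInS hmu_inter hmu_union hmu_himp u w hP hdual
end
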